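/- For all real numbers α, β, δ > 0 with α − βδ < −1, there exists a constant C (depending only on α, β, δ) such that for every ξ ∈ ℝ^d, ∫₀¹ t^α / (t^δ + ⟨ξ⟩^{−2})^β dt ≤ C · ⟨ξ⟩^{2(βδ − α − 1)/δ}. -/

import Mathlib

/-!
Split the integral at `T = m ^ (1 / δ)`, where `m = ⟨ξ⟩ ^ (-2)` and the two terms of the
denominator balance. On `[0, T]` the denominator is at least `m ^ β`, which gives
`T ^ (α + 1) / ((α + 1) m ^ β)`; on `[T, 1]` it is at least `t ^ (β δ)`, and since
`α - β δ < -1` the integral of `t ^ (α - β δ)` is at most `T ^ (α - β δ + 1) / (β δ - α - 1)`.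
Both bounds are constants times `m ^ ((α + 1) / δ - β) = ⟨ξ⟩ ^ (2 (β δ - α - 1) / δ)`.
-/

open MeasureTheory Real Set

section RpowKernel

variable {α β δ m t : ℝ}

lemma rpow_div_add_rpow_le_div_rpow (hβ : 0 ≤ β) (hm : 0 < m) (ht : 0 ≤ t) :
    t ^ α / (t ^ δ + m) ^ β ≤ t ^ α / m ^ β := by
  have htδ : 0 ≤ t ^ δ := rpow_nonneg ht δ
  exact div_le_div_of_nonneg_left (rpow_nonneg ht α) (rpow_pos_of_pos hm β)
    (rpow_le_rpow hm.le (by linarith) hβ)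

lemma rpow_div_add_rpow_le_rpow_sub (hβ : 0 ≤ β) (hm : 0 ≤ m) (ht : 0 < t) :
    t ^ α / (t ^ δ + m) ^ β ≤ t ^ (α - β * δ) := by
  have htδ : 0 < t ^ δ := rpow_pos_of_pos ht δ
  calc t ^ α / (t ^ δ + m) ^ β ≤ t ^ α / (t ^ δ) ^ β :=
        div_le_div_of_nonneg_left (rpow_nonneg ht.le α) (rpow_pos_of_pos htδ β)
          (rpow_le_rpow htδ.le (by linarith) hβ)
    _ = t ^ (α - β * δ) := by rw [← rpow_mul ht.le, rpow_sub ht, mul_comm]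

lemma intervalIntegrable_rpow_div_add_rpow (hα : -1 < α) (hβ : 0 ≤ β) (hm : 0 < m)
    {b : ℝ} (hb : 0 ≤ b) :
    IntervalIntegrable (fun t ↦ t ^ α / (t ^ δ + m) ^ β) volume 0 b := by
  refine ((intervalIntegral.intervalIntegrable_rpow' hα).div_const (m ^ β)).mono_fun' ?_ ?_
  · exact Measurable.aestronglyMeasurable (by fun_prop)
  · rw [uIoc_of_le hb]
    refine (ae_restrict_iff' measurableSet_Ioc).2 (Filter.Eventually.of_forall fun t ht ↦ ?_)
    have htδ : 0 ≤ t ^ δ := rpow_nonneg ht.1.le δ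
    dsimp only
    rw [Real.norm_of_nonneg (div_nonneg (rpow_nonneg ht.1.le α)
      (rpow_nonneg (by linarith) β))]
    exact rpow_div_add_rpow_le_div_rpow hβ hm ht.1.le

lemma integral_rpow_le_of_lt_neg_one {γ T : ℝ} (hγ : γ < -1) (hT : 0 < T) :
    ∫ t in T..1, t ^ γ ≤ T ^ (γ + 1) / (-γ - 1) := by
  have h0 : (0 : ℝ) ∉ uIcc T 1 := fun h0 ↦ by
    rcases le_total T 1 with h | h
    · exact absurd (uIcc_of_le h ▸ h0).1 hT.not_ge
    · exact absurd (uIcc_of_ge h ▸ h0).1 zero_lt_one.not_ge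
  rw [integral_rpow (Or.inr ⟨by linarith, h0⟩), one_rpow,
    show (1 - T ^ (γ + 1)) / (γ + 1) = (T ^ (γ + 1) - 1) / (-γ - 1) by
      rw [div_eq_div_iff (by linarith) (by linarith)]; ring]
  gcongr
  · linarith
  · linarith

theorem integral_rpow_div_add_rpow_le (hα : -1 < α) (hβ : 0 ≤ β) (hδ : 0 < δ)
    (h : α - β * δ < -1) (hm : 0 < m) (hm1 : m ≤ 1) :
    ∫ t in (0 : ℝ)..1, t ^ α / (t ^ δ + m) ^ β
      ≤ (1 / (α + 1) + 1 / (β * δ - α - 1)) * m ^ ((α + 1) / δ - β) := by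
  set T := m ^ (1 / δ)
  have hT0 : 0 < T := rpow_pos_of_pos hm _
  have hT1 : T ≤ 1 := rpow_le_one hm.le hm1 (by positivity)
  have hTm (e : ℝ) : T ^ e = m ^ (e / δ) := by rw [← rpow_mul hm.le]; ring_nf
  have hint := intervalIntegrable_rpow_div_add_rpow (δ := δ) hα hβ hm zero_le_one
  have hTmem : T ∈ uIcc 0 1 := by rw [uIcc_of_le zero_le_one]; exact ⟨hT0.le, hT1⟩
  have hintL := hint.mono_set (uIcc_subset_uIcc left_mem_uIcc hTmem)
  have hintR := hint.mono_set (uIcc_subset_uIcc hTmem right_mem_uIcc)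
  have hleft : ∫ t in (0 : ℝ)..T, t ^ α / (t ^ δ + m) ^ β ≤ ∫ t in (0 : ℝ)..T, t ^ α / m ^ β :=
    intervalIntegral.integral_mono_on hT0.le hintL
      ((intervalIntegral.intervalIntegrable_rpow' hα).div_const _)
      fun t ht ↦ rpow_div_add_rpow_le_div_rpow hβ hm ht.1
  have hright : ∫ t in T..1, t ^ α / (t ^ δ + m) ^ β ≤ ∫ t in T..1, t ^ (α - β * δ) :=
    intervalIntegral.integral_mono_on hT1 hintR
      (intervalIntegral.intervalIntegrable_rpow (Or.inr fun h0 ↦ hT0.not_ge (uIcc_of_le hT1 ▸ h0).1))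
      fun t ht ↦ rpow_div_add_rpow_le_rpow_sub hβ hm.le (hT0.trans_le ht.1)
  calc ∫ t in (0 : ℝ)..1, t ^ α / (t ^ δ + m) ^ β
      = (∫ t in (0 : ℝ)..T, t ^ α / (t ^ δ + m) ^ β) + ∫ t in T..1, t ^ α / (t ^ δ + m) ^ β :=
        (intervalIntegral.integral_add_adjacent_intervals hintL hintR).symm
    _ ≤ T ^ (α + 1) / (α + 1) / m ^ β + T ^ (α - β * δ + 1) / (β * δ - α - 1) := by
        refine add_le_add (hleft.trans_eq ?_) (hright.trans ?_)
        · rw [intervalIntegral.integral_div, integral_rpow (Or.inl hα), zero_rpow (by linarith),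
            sub_zero]
        · rw [show β * δ - α - 1 = -(α - β * δ) - 1 by ring]
          exact integral_rpow_le_of_lt_neg_one h hT0
    _ = (1 / (α + 1) + 1 / (β * δ - α - 1)) * m ^ ((α + 1) / δ - β) := by
        rw [hTm, hTm, div_right_comm, ← rpow_sub hm,
          show (α - β * δ + 1) / δ = (α + 1) / δ - β by field_simp; ring]
        ring

end RpowKernel

/-- Lemma 4.1 (case α − βδ < −1): polynomial bound for the integral
∫₀¹ t^α / (t^δ + ⟨ξ⟩^{−2})^β dt, where ⟨ξ⟩ = √(1+|ξ|²). -/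
theorem stmt_2 (d : ℕ) (α β δ : ℝ) (hα : 0 < α) (hβ : 0 < β) (hδ : 0 < δ)
    (h : α - β * δ < -1) :
    ∃ C : ℝ, ∀ ξ : EuclideanSpace ℝ (Fin d),
      ∫ t in (0:ℝ)..1, t ^ α / (t ^ δ + (Real.sqrt (1 + ‖ξ‖ ^ 2)) ^ (-2 : ℝ)) ^ β
        ≤ C * (Real.sqrt (1 + ‖ξ‖ ^ 2)) ^ (2 * (β * δ - α - 1) / δ) := by
  refine ⟨1 / (α + 1) + 1 / (β * δ - α - 1), fun ξ ↦ ?_⟩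
  set a := Real.sqrt (1 + ‖ξ‖ ^ 2)
  have ha : 1 ≤ a := Real.one_le_sqrt.2 (le_add_of_nonneg_right (sq_nonneg _))
  have hm : 0 < a ^ (-2 : ℝ) := rpow_pos_of_pos (zero_lt_one.trans_le ha) _
  have hm1 : a ^ (-2 : ℝ) ≤ 1 := rpow_le_one_of_one_le_of_nonpos ha (by norm_num)
  convert integral_rpow_div_add_rpow_le (by linarith) hβ.le hδ h hm hm1 using 2
  rw [← rpow_mul (zero_le_one.trans ha)]
  congr 1
  field_simp
  ring
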